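/- Let q be a prime power with q > 2 and let a be a nonzero element of F_q. The polynomial f_a(x) := -a^2 * (((x - a)^(q-2) + a^(-1))^(q-2) - a)^(q-2) induces on F_q the transposition (0 a), i.e., the evaluation map of f_a sends 0 to a, sends a to 0, and fixes every other element of F_q. -/

import Mathlib

/-
Over `F_q` with `q > 2` the power map `y ↦ y ^ (q - 2)` is `y ↦ y⁻¹` with `0⁻¹ = 0`, so `f_a` is
the rational expression `carlitzRat a`. For `x ∉ {0, a}` one has
`(x - a)⁻¹ + a⁻¹ = x / (a (x - a))`, hence the outer base is `-a² / x` and `f_a x = x`; at the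
two exceptional points the convention `0⁻¹ = 0` is what swaps `0` and `a`.
-/

theorem FiniteField.pow_card_sub_two_eq_inv {F : Type*} [Field F] [Fintype F]
    (hF : 2 < Fintype.card F) (x : F) : x ^ (Fintype.card F - 2) = x⁻¹ := by
  rcases eq_or_ne x 0 with rfl | hx
  · rw [inv_zero, zero_pow (by omega)]
  · calc x ^ (Fintype.card F - 2) = x ^ (Fintype.card F - 1 - 1) := by congr 1
      _ = x⁻¹ := by
        rw [pow_sub₀ x hx (by omega), FiniteField.pow_card_sub_one_eq_one x hx, pow_one, one_mul]

section

variable {F : Type*} [Field F] {a : F}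

def carlitzRat (a x : F) : F := -a ^ 2 * (((x - a)⁻¹ + a⁻¹)⁻¹ - a)⁻¹

theorem carlitzRat_zero : carlitzRat a 0 = a := by
  unfold carlitzRat
  rcases eq_or_ne a 0 with rfl | ha
  · simp
  · field_simp
    ring

theorem carlitzRat_self : carlitzRat a a = 0 := by
  simp [carlitzRat]

theorem carlitzRat_of_ne (ha : a ≠ 0) {x : F} (hx : x ≠ 0) (hxa : x ≠ a) :
    carlitzRat a x = x := by
  have hxa' : x - a ≠ 0 := sub_ne_zero.mpr hxa
  have h_sum : (x - a)⁻¹ + a⁻¹ = x / ((x - a) * a) := by field_simp; ring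
  have h_mid : (x - a) * a / x - a = -a ^ 2 / x := by field_simp; ring
  rw [carlitzRat, h_sum, inv_div, h_mid, inv_div]
  field_simp

end

/-- **Carlitz's transposition polynomial.** For a finite field `F` with `q > 2`
elements and a nonzero `a ∈ F`, the polynomial
`f_a(x) = -a^2 * (((x - a)^(q-2) + a⁻¹)^(q-2) - a)^(q-2)` induces the
transposition `(0 a)` on `F`: it sends `0` to `a`, `a` to `0`, and fixes every
other element. -/
theorem carlitz_transposition (F : Type*) [Field F] [Fintype F]
    (hF : 2 < Fintype.card F) (a : F) (ha : a ≠ 0)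
    (f : F → F)
    (hf : ∀ x : F, f x =
      -a ^ 2 * (((x - a) ^ (Fintype.card F - 2) + a⁻¹) ^ (Fintype.card F - 2)
        - a) ^ (Fintype.card F - 2)) :
    f 0 = a ∧ f a = 0 ∧ ∀ x : F, x ≠ 0 → x ≠ a → f x = x := by
  simp only [hf, FiniteField.pow_card_sub_two_eq_inv hF]
  exact ⟨carlitzRat_zero, carlitzRat_self, fun x hx hxa => carlitzRat_of_ne ha hx hxa⟩
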